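/- arXiv:2012.12670 — 5 statements merged into one kernel-verified Lean document; each statement's English description precedes it below -/
import Mathlib

section
/- (Regular distributions are characterised by the test functions.) Let d ∈ ℕ and let μ, ν be regular probability measures on ℝ^d. If ∫ f dμ = ∫ f dν for every test function f ∈ F_d, then μ = ν. -/
open MeasureTheory Set

/-- The open interval (a,b) in ℝ, with possibly infinite endpoints a, b ∈ EReal. -/
def erealIoo (a b : EReal) : Set ℝ := {x : ℝ | a < (x : EReal) ∧ (x : EReal) < b}

/-- A measure on ℝ is regular on (a,b) if it is supported in (a,b) and equivalent to
the restriction of Lebesgue measure to (a,b). -/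
def regularOn (γ : Measure ℝ) (a b : EReal) : Prop :=
  γ (erealIoo a b)ᶜ = 0 ∧
  γ ≪ volume.restrict (erealIoo a b) ∧
  volume.restrict (erealIoo a b) ≪ γ

/-- A measure on ℝ^d is regular if it is equivalent to Lebesgue measure. -/
def regular {d : ℕ} (ν : Measure (Fin d → ℝ)) : Prop :=
  ν ≪ volume ∧ volume ≪ ν

/-- The set of test functions F_d: measurable f : ℝ^d → ℝ with range in some open interval
(a,b), such that f_#ν is regular on (a,b) whenever ν is a regular probability measure. -/
def testFun {d : ℕ} (f : (Fin d → ℝ) → ℝ) : Prop :=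
  Measurable f ∧
  ∃ a b : EReal, a < b ∧ (∀ x, a < (f x : EReal) ∧ (f x : EReal) < b) ∧
    ∀ ν : Measure (Fin d → ℝ), IsProbabilityMeasure ν → regular ν →
      regularOn (ν.map f) a b

/-! For `m ≠ 0` and measurable `g`, the function `x ↦ arctan (m x₀ + g (x₁, …, x_d))` on `ℝ^(d+1)`
is a test function: on each line parallel to the first axis it is an affine bijection followed by
`arctan`, so by Fubini it pulls null sets of `(-π/2, π/2)` back to null sets and only those.
Choosing `m` and `g` suitably, such functions converge pointwise off a hyperplane (null for regular
measures) to `π/2 - π 1_{(-∞, c] × t}`; dominated convergence then shows that `μ` and `ν` agree on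
these rectangles, and finite measures on `ℝ × ℝ^d` are determined by them. -/

open Real Filter Topology

lemma volume_preimage_mul_add {m : ℝ} (hm : m ≠ 0) (a : ℝ) (s : Set ℝ) :
    volume ((fun y => m * y + a) ⁻¹' s) = ENNReal.ofReal |m⁻¹| * volume s := by
  change volume ((m * ·) ⁻¹' ((· + a) ⁻¹' s)) = _
  rw [Real.volume_preimage_mul_left hm, measure_preimage_add_right]

lemma volume_preimage_arctan_eq_zero_iff {s : Set ℝ} :
    volume (arctan ⁻¹' s) = 0 ↔ volume (s ∩ Ioo (-(π / 2)) (π / 2)) = 0 := by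
  constructor
  · intro h
    have hsub : s ∩ Ioo (-(π / 2)) (π / 2) ⊆ arctan '' (arctan ⁻¹' s) := fun y hy =>
      ⟨tan y, by simpa [arctan_tan hy.2.1 hy.2.2] using hy.1, arctan_tan hy.2.1 hy.2.2⟩
    exact measure_mono_null hsub (addHaar_image_eq_zero_of_differentiableOn_of_addHaar_eq_zero
      volume differentiable_arctan.differentiableOn h)
  · intro h
    have hsub : arctan ⁻¹' s ⊆ tan '' (s ∩ Ioo (-(π / 2)) (π / 2)) := fun x hx =>
      ⟨arctan x, ⟨hx, neg_pi_div_two_lt_arctan x, arctan_lt_pi_div_two x⟩, tan_arctan x⟩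
    refine measure_mono_null hsub
      (addHaar_image_eq_zero_of_differentiableOn_of_addHaar_eq_zero volume (fun y hy => ?_) h)
    exact (differentiableAt_tan.mpr (cos_pos_of_mem_Ioo hy.2).ne').differentiableWithinAt

lemma volume_prod_preimage_shear {E : Type*} [MeasurableSpace E] (ρ : Measure E) [SFinite ρ]
    {m : ℝ} (hm : m ≠ 0) {g : E → ℝ} (hg : Measurable g) {s : Set ℝ} (hs : MeasurableSet s) :
    (volume.prod ρ) ((fun p => m * p.1 + g p.2) ⁻¹' s)
      = ENNReal.ofReal |m⁻¹| * volume s * ρ univ := by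
  have hshear : Measurable fun p : ℝ × E => m * p.1 + g p.2 := by fun_prop
  rw [Measure.prod_apply_symm (hshear hs)]
  simp only [preimage_preimage, volume_preimage_mul_add hm, lintegral_const]

lemma piFinSuccAbove_zero_apply {d : ℕ} (x : Fin (d + 1) → ℝ) :
    MeasurableEquiv.piFinSuccAbove (fun _ => ℝ) 0 x = (x 0, Fin.tail x) := rfl

lemma volume_pi_preimage_shear_eq_zero_iff {d : ℕ} {m : ℝ} (hm : m ≠ 0)
    {g : (Fin d → ℝ) → ℝ} (hg : Measurable g) {s : Set ℝ} (hs : MeasurableSet s) :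
    volume ((fun x : Fin (d + 1) → ℝ => m * x 0 + g (Fin.tail x)) ⁻¹' s) = 0
      ↔ volume s = 0 := by
  have he := volume_preserving_piFinSuccAbove (fun _ : Fin (d + 1) => ℝ) 0
  have := he.measure_preimage_equiv ((fun p : ℝ × (Fin d → ℝ) => m * p.1 + g p.2) ⁻¹' s)
  rw [Measure.volume_eq_prod, volume_prod_preimage_shear _ hm hg hs] at this
  simp only [preimage_preimage, piFinSuccAbove_zero_apply] at this
  rw [this]
  simp [hm, NeZero.ne]

lemma regular.measure_eq_zero_iff {d : ℕ} {ν : Measure (Fin d → ℝ)} (hν : regular ν)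
    {s : Set (Fin d → ℝ)} : ν s = 0 ↔ volume s = 0 :=
  ⟨fun h => hν.2 h, fun h => hν.1 h⟩

lemma measurableSet_erealIoo (a b : EReal) : MeasurableSet (erealIoo a b) :=
  (measurableSet_lt measurable_const measurable_coe_real_ereal).inter
    (measurableSet_lt measurable_coe_real_ereal measurable_const)

lemma erealIoo_coe (a b : ℝ) : erealIoo a b = Ioo a b := by
  ext x
  simp [erealIoo]

lemma regularOn_of_measure_eq_zero_iff {γ : Measure ℝ} {a b : EReal}
    (h : ∀ s, MeasurableSet s → (γ s = 0 ↔ volume (s ∩ erealIoo a b) = 0)) :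
    regularOn γ a b := by
  have hI := measurableSet_erealIoo a b
  refine ⟨(h _ hI.compl).2 (by simp), .mk fun s hs h0 => (h s hs).2 ?_,
    .mk fun s hs h0 => ?_⟩
  · rwa [Measure.restrict_apply hs] at h0
  · rw [Measure.restrict_apply hs]
    exact (h s hs).1 h0

lemma testFun_arctan_shear {d : ℕ} {m : ℝ} (hm : m ≠ 0) {g : (Fin d → ℝ) → ℝ}
    (hg : Measurable g) :
    testFun fun x : Fin (d + 1) → ℝ => arctan (m * x 0 + g (Fin.tail x)) := by
  have hshear : Measurable fun x : Fin (d + 1) → ℝ => m * x 0 + g (Fin.tail x) :=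
    (measurable_const.mul (measurable_pi_apply 0)).add (hg.comp (by fun_prop))
  have hf : Measurable fun x : Fin (d + 1) → ℝ => arctan (m * x 0 + g (Fin.tail x)) :=
    measurable_arctan.comp hshear
  refine ⟨hf, ((-(π / 2) : ℝ) : EReal), ((π / 2 : ℝ) : EReal),
    EReal.coe_lt_coe_iff.2 (by linarith [pi_pos]), fun x => ⟨EReal.coe_lt_coe_iff.2
    (neg_pi_div_two_lt_arctan _), EReal.coe_lt_coe_iff.2 (arctan_lt_pi_div_two _)⟩,
    fun ν _ hν => regularOn_of_measure_eq_zero_iff fun s hs => ?_⟩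
  rw [Measure.map_apply hf hs, erealIoo_coe,
    ← volume_preimage_arctan_eq_zero_iff,
    ← volume_pi_preimage_shear_eq_zero_iff hm hg (measurable_arctan hs)]
  exact hν.measure_eq_zero_iff

lemma MeasureTheory.Measure.ext_prod_Iic {α β : Type*} [TopologicalSpace α] [LinearOrder α]
    [OrderTopology α] [SecondCountableTopology α] [MeasurableSpace α] [BorelSpace α]
    [MeasurableSpace β] {ρ₁ ρ₂ : Measure (α × β)} [IsFiniteMeasure ρ₁]
    (h : ∀ a {t : Set β}, MeasurableSet t → ρ₁ (Iic a ×ˢ t) = ρ₂ (Iic a ×ˢ t)) :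
    ρ₁ = ρ₂ := by
  refine Measure.ext_prod fun {s t} hs ht => ?_
  have fst_slice : ∀ (ρ : Measure (α × β)) {s : Set α}, MeasurableSet s →
      ((ρ.restrict (univ ×ˢ t)).map Prod.fst) s = ρ (s ×ˢ t) := fun ρ s hs => by
    rw [Measure.map_apply measurable_fst hs, Measure.restrict_apply (measurable_fst hs),
      ← prod_univ, prod_inter_prod, inter_univ, univ_inter]
  have := Measure.ext_of_Iic ((ρ₁.restrict (univ ×ˢ t)).map Prod.fst)
    ((ρ₂.restrict (univ ×ˢ t)).map Prod.fst) fun a => by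
    rw [fst_slice ρ₁ measurableSet_Iic, fst_slice ρ₂ measurableSet_Iic, h a ht]
  rw [← fst_slice ρ₁ hs, ← fst_slice ρ₂ hs, this]

section Cutoff

variable {E : Type*} (c : ℝ) (t : Set E)

/-- Off the hyperplane `p.1 = c` these tend to `π / 2 - π 1_{Iic c ×ˢ t}`: the `(n + 1)²` term
sends the points with `p.2 ∉ t` to `+∞` whatever the sign of `p.1 - c`. -/
noncomputable def arctanCutoff (n : ℕ) (p : ℝ × E) : ℝ :=
  arctan (((n : ℝ) + 1) * (p.1 - c + ((n : ℝ) + 1) * tᶜ.indicator 1 p.2))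

lemma abs_arctanCutoff_le (n : ℕ) (p : ℝ × E) : |arctanCutoff c t n p| ≤ π / 2 :=
  abs_le.2 ⟨(neg_pi_div_two_lt_arctan _).le, (arctan_lt_pi_div_two _).le⟩

variable {c t}

lemma measurable_arctanCutoff [MeasurableSpace E] (ht : MeasurableSet t) (n : ℕ) :
    Measurable (arctanCutoff c t n) :=
  measurable_arctan.comp (measurable_const.mul ((measurable_fst.sub measurable_const).add
    (measurable_const.mul ((measurable_const.indicator ht.compl).comp measurable_snd))))

lemma tendsto_arctanCutoff {p : ℝ × E} (hp : p.1 ≠ c) :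
    Tendsto (fun n => arctanCutoff c t n p) atTop
      (𝓝 (π / 2 - (Iic c ×ˢ t).indicator (fun _ => π) p)) := by
  have hN : Tendsto (fun n : ℕ => (n : ℝ) + 1) atTop atTop :=
    tendsto_atTop_add_const_right _ 1 tendsto_natCast_atTop_atTop
  have to_top {f : ℕ → ℝ} (hf : Tendsto f atTop atTop) :
      Tendsto (fun n => arctan (f n)) atTop (𝓝 (π / 2)) :=
    (tendsto_arctan_atTop.mono_right nhdsWithin_le_nhds).comp hf
  have to_bot {f : ℕ → ℝ} (hf : Tendsto f atTop atBot) :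
      Tendsto (fun n => arctan (f n)) atTop (𝓝 (-(π / 2))) :=
    (tendsto_arctan_atBot.mono_right nhdsWithin_le_nhds).comp hf
  unfold arctanCutoff
  by_cases ht : p.2 ∈ t
  · simp only [indicator_of_notMem (notMem_compl_iff.2 ht), mul_zero, add_zero]
    rcases hp.lt_or_gt with hlt | hgt
    · rw [indicator_of_mem (mk_mem_prod (mem_Iic.2 hlt.le) ht), show π / 2 - π = -(π / 2) by ring]
      exact to_bot (hN.atTop_mul_const_of_neg (sub_neg.2 hlt))
    · rw [indicator_of_notMem (fun hS => hgt.not_ge (mem_prod.1 hS).1), sub_zero]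
      exact to_top (hN.atTop_mul_const (sub_pos.2 hgt))
  · simp only [indicator_of_mem (mem_compl ht), Pi.one_apply, mul_one,
      indicator_of_notMem (fun hS => ht (mem_prod.1 hS).2), sub_zero]
    exact to_top (hN.atTop_mul_atTop₀ (tendsto_atTop_add_const_left _ _ hN))

lemma tendsto_integral_arctanCutoff [MeasurableSpace E] (ht : MeasurableSet t)
    (ρ : Measure (ℝ × E)) [IsProbabilityMeasure ρ] (hρ : ρ (Prod.fst ⁻¹' {c}) = 0) :
    Tendsto (fun n => ∫ p, arctanCutoff c t n p ∂ρ) atTop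
      (𝓝 (π / 2 - ρ.real (Iic c ×ˢ t) * π)) := by
  have hS : MeasurableSet (Iic c ×ˢ t) := measurableSet_Iic.prod ht
  have hlim : ∀ᵐ p ∂ρ, Tendsto (fun n => arctanCutoff c t n p) atTop
      (𝓝 (π / 2 - (Iic c ×ˢ t).indicator (fun _ => π) p)) := by
    filter_upwards [measure_eq_zero_iff_ae_notMem.1 hρ] with p hp
    exact tendsto_arctanCutoff hp
  have := tendsto_integral_of_dominated_convergence (fun _ => π / 2)
    (fun n => (measurable_arctanCutoff ht n).aestronglyMeasurable) (integrable_const _)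
    (fun n => ae_of_all _ (abs_arctanCutoff_le c t n)) hlim
  rwa [integral_sub (integrable_const _) ((integrable_const π).indicator hS), integral_const,
    integral_indicator_const _ hS, probReal_univ, one_smul, smul_eq_mul] at this

end Cutoff

theorem ext_of_integral_arctan_shear_eq {E : Type*} [MeasurableSpace E]
    {ρ₁ ρ₂ : Measure (ℝ × E)} [IsProbabilityMeasure ρ₁] [IsProbabilityMeasure ρ₂]
    (h₁ : ∀ c, ρ₁ (Prod.fst ⁻¹' {c}) = 0) (h₂ : ∀ c, ρ₂ (Prod.fst ⁻¹' {c}) = 0)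
    (h : ∀ m : ℝ, m ≠ 0 → ∀ g : E → ℝ, Measurable g →
      ∫ p, arctan (m * p.1 + g p.2) ∂ρ₁ = ∫ p, arctan (m * p.1 + g p.2) ∂ρ₂) :
    ρ₁ = ρ₂ := by
  refine Measure.ext_prod_Iic fun c t ht => ?_
  have heq (n : ℕ) : ∫ p, arctanCutoff c t n p ∂ρ₁ = ∫ p, arctanCutoff c t n p ∂ρ₂ := by
    have h_shear (p : ℝ × E) : arctanCutoff c t n p = arctan (((n : ℝ) + 1) * p.1
        + ((n : ℝ) + 1) * (((n : ℝ) + 1) * tᶜ.indicator 1 p.2 - c)) := by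
      unfold arctanCutoff
      ring_nf
    simpa only [h_shear] using h _ (by positivity)
      (fun z => ((n : ℝ) + 1) * (((n : ℝ) + 1) * tᶜ.indicator 1 z - c))
      (measurable_const.mul ((measurable_const.mul (measurable_const.indicator ht.compl)).sub
        measurable_const))
  have hreal := tendsto_nhds_unique
    (by simpa only [heq] using tendsto_integral_arctanCutoff ht ρ₁ (h₁ c))
    (tendsto_integral_arctanCutoff ht ρ₂ (h₂ c))
  have : ρ₁.real (Iic c ×ˢ t) = ρ₂.real (Iic c ×ˢ t) := by nlinarith [pi_pos]
  exact (ENNReal.toReal_eq_toReal_iff' (measure_ne_top _ _) (measure_ne_top _ _)).1 this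
/-- Regular distributions are characterised by the test functions F_d: if two regular
probability measures on ℝ^d agree on the integral of every test function, they are equal. -/
theorem stmt_3 {d : ℕ} (μ ν : Measure (Fin d → ℝ))
    [IsProbabilityMeasure μ] [IsProbabilityMeasure ν]
    (hμ : regular μ) (hν : regular ν)
    (h : ∀ f : (Fin d → ℝ) → ℝ, testFun f → ∫ x, f x ∂μ = ∫ x, f x ∂ν) :
    μ = ν := by
  cases d with
  | zero =>
    ext s
    rcases s.eq_empty_or_nonempty with rfl | hs
    · simp
    · simp [hs.eq_univ]
  | succ d =>
    let e := MeasurableEquiv.piFinSuccAbove (fun _ : Fin (d + 1) => ℝ) 0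
    have no_atoms {ρ : Measure (Fin (d + 1) → ℝ)} (hρ : regular ρ) (c : ℝ) :
        ρ.map e (Prod.fst ⁻¹' {c}) = 0 := by
      rw [e.map_apply]
      exact hρ.measure_eq_zero_iff.2
        (Measure.pi_hyperplane (α := fun _ : Fin (d + 1) => ℝ) (fun _ => volume) 0 c :)
    have := Measure.isProbabilityMeasure_map (μ := μ) e.measurable.aemeasurable
    have := Measure.isProbabilityMeasure_map (μ := ν) e.measurable.aemeasurable
    refine e.map_measurableEquiv_injective
      (ext_of_integral_arctan_shear_eq (no_atoms hμ) (no_atoms hν) fun m hm g hg => ?_)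
    rw [integral_map_equiv, integral_map_equiv]
    exact h _ (testFun_arctan_shear hm hg)
end

section
/- Let μ and ν be regular probability measures on ℝ^d. Suppose that for every x* ∈ ℝ^d and every c > 0 one has ∫ f_{x*,c} dμ = ∫ f_{x*,c} dν, where f_{x*,c}(θ) := ∏_{i=1}^d (1 + exp(2c(θ_i − x*_i)))^{-1}. Then μ = ν. -/
/-!
As `c → ∞`, the factor `(1 + exp (2c (θᵢ - xᵢ)))⁻¹ = sigmoid (2c (xᵢ - θᵢ))` tends to the indicator
of `θᵢ < xᵢ` away from the hyperplane `θᵢ = xᵢ`, which is null for any measure absolutely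
continuous with respect to Lebesgue measure. By dominated convergence the integrals of the test
functions tend to the measure of the open lower orthant at `x`, so `μ` and `ν` agree on these
orthants; they form a π-system generating the Borel σ-algebra of `ℝ^d`.
-/

open MeasureTheory Set Filter Topology Real

lemma tendsto_inv_one_add_exp_mul_sub {t a : ℝ} (ht : t ≠ a) :
    Tendsto (fun c => (1 + exp (c * (t - a)))⁻¹) atTop (𝓝 ((Iio a).indicator 1 t)) := by
  simp_rw [← neg_sub a t, mul_neg, ← sigmoid_def]
  rcases ht.lt_or_gt with hlt | hgt
  · rw [indicator_of_mem (mem_Iio.mpr hlt), Pi.one_apply]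
    exact tendsto_sigmoid_atTop.comp (tendsto_id.atTop_mul_const (sub_pos.mpr hlt))
  · rw [indicator_of_notMem (notMem_Iio.mpr hgt.le)]
    exact tendsto_sigmoid_atBot.comp (tendsto_id.atTop_mul_const_of_neg (sub_neg.mpr hgt))

lemma tendsto_prod_inv_one_add_exp_mul_sub {ι : Type*} [Fintype ι] {θ x : ι → ℝ}
    (hθ : ∀ i, θ i ≠ x i) :
    Tendsto (fun c => ∏ i, (1 + exp (c * (θ i - x i)))⁻¹) atTop
      (𝓝 ((univ.pi fun i => Iio (x i)).indicator 1 θ)) := by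
  rw [← Finset.coe_univ, indicator_pi_one_apply]
  exact tendsto_finsetProd _ fun i _ => tendsto_inv_one_add_exp_mul_sub (hθ i)

lemma ae_forall_ne_apply {ι : Type*} [Fintype ι] (x : ι → ℝ) :
    ∀ᵐ θ ∂(volume : Measure (ι → ℝ)), ∀ i, θ i ≠ x i :=
  ae_all_iff.mpr fun i => by
    simpa [ae_iff, volume_pi] using Measure.pi_hyperplane (fun _ : ι => (volume : Measure ℝ)) i (x i)

lemma tendsto_integral_prod_inv_one_add_exp_mul_sub {ι : Type*} [Fintype ι]
    {ρ : Measure (ι → ℝ)} [IsFiniteMeasure ρ] (hρ : ρ ≪ volume) (x : ι → ℝ) :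
    Tendsto (fun c => ∫ θ, ∏ i, (1 + exp (c * (θ i - x i)))⁻¹ ∂ρ) atTop
      (𝓝 (ρ.real (univ.pi fun i => Iio (x i)))) := by
  have hbox : MeasurableSet (univ.pi fun i => Iio (x i)) :=
    MeasurableSet.univ_pi fun i => measurableSet_Iio
  rw [← integral_indicator_one hbox]
  refine tendsto_integral_filter_of_dominated_convergence (fun _ => 1) ?_ ?_ (integrable_const 1)
    (((ae_forall_ne_apply x).filter_mono hρ.ae_le).mono
      fun θ => tendsto_prod_inv_one_add_exp_mul_sub)
  · exact .of_forall fun c => Measurable.aestronglyMeasurable (by fun_prop)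
  · refine .of_forall fun c => .of_forall fun θ => ?_
    have hfac : ∀ t : ℝ, 0 ≤ (1 + exp t)⁻¹ ∧ (1 + exp t)⁻¹ ≤ 1 := fun t =>
      ⟨by positivity, inv_le_one_of_one_le₀ (by linarith [exp_pos t])⟩
    rw [norm_of_nonneg (Finset.prod_nonneg fun i _ => (hfac _).1)]
    exact Finset.prod_le_one (fun i _ => (hfac _).1) fun i _ => (hfac _).2

lemma isCountablySpanning_range_Iio : IsCountablySpanning (range (Iio : ℝ → Set ℝ)) :=
  ⟨fun n : ℕ => Iio (n : ℝ), fun _ => mem_range_self _, iUnion_eq_univ_iff.mpr exists_nat_gt⟩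

lemma MeasurableSpace.pi_eq_generateFrom_univ_pi_Iio {ι : Type*} [Finite ι] :
    (MeasurableSpace.pi : MeasurableSpace (ι → ℝ)) =
      generateFrom (univ.pi '' univ.pi fun _ => range Iio) := by
  rw [← generateFrom_pi_eq fun _ => isCountablySpanning_range_Iio, ← borel_eq_generateFrom_Iio,
    ← BorelSpace.measurable_eq]

lemma MeasureTheory.Measure.ext_of_univ_pi_Iio {ι : Type*} [Finite ι] {μ ν : Measure (ι → ℝ)}
    [IsFiniteMeasure μ]
    (h : ∀ x : ι → ℝ, μ (univ.pi fun i => Iio (x i)) = ν (univ.pi fun i => Iio (x i))) :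
    μ = ν := by
  obtain ⟨B, hBC, hB⟩ := IsCountablySpanning.pi fun (_ : ι) => isCountablySpanning_range_Iio
  refine ext_of_generateFrom_of_iUnion _ B MeasurableSpace.pi_eq_generateFrom_univ_pi_Iio
    (IsPiSystem.pi fun _ => isPiSystem_Iio) hB hBC (fun _ => measure_ne_top _ _) ?_
  rintro _ ⟨s, hs, rfl⟩
  choose x hx using fun i => hs i (mem_univ i)
  obtain rfl : s = fun i => Iio (x i) := funext fun i => (hx i).symm
  exact h x

/-- If two regular probability measures on ℝ^d agree on the integrals of all the sigmoidal
product test functions f_{x*,c}(θ) = ∏_i (1 + exp(2c(θ_i − x*_i)))⁻¹, then they are equal. -/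
theorem stmt_5 {d : ℕ} (μ ν : Measure (Fin d → ℝ))
    [IsProbabilityMeasure μ] [IsProbabilityMeasure ν]
    (hμ : regular μ) (hν : regular ν)
    (h : ∀ (xstar : Fin d → ℝ) (c : ℝ), 0 < c →
      ∫ θ, ∏ i, (1 + Real.exp (2 * c * (θ i - xstar i)))⁻¹ ∂μ =
      ∫ θ, ∏ i, (1 + Real.exp (2 * c * (θ i - xstar i)))⁻¹ ∂ν) :
    μ = ν := by
  refine Measure.ext_of_univ_pi_Iio fun x => ?_
  have hlim {ρ : Measure (Fin d → ℝ)} [IsFiniteMeasure ρ] (hρ : ρ ≪ volume) :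
      Tendsto (fun c => ∫ θ, ∏ i, (1 + exp (2 * c * (θ i - x i)))⁻¹ ∂ρ) atTop
        (𝓝 (ρ.real (univ.pi fun i => Iio (x i)))) :=
    (tendsto_integral_prod_inv_one_add_exp_mul_sub hρ x).comp
      (tendsto_id.const_mul_atTop two_pos)
  have hμν := tendsto_nhds_unique
    ((hlim hμ.1).congr' ((eventually_gt_atTop 0).mono (h x))) (hlim hν.1)
  exact (measureReal_eq_measureReal_iff (measure_ne_top _ _) (measure_ne_top _ _)).mp hμν
end

section
/- (Strongly calibrated implies weakly calibrated.) Let d ∈ ℕ, let Y be a measurable space, let μ_0 be a regular probability measure on ℝ^d, let P : ℝ^d → P(Y) be a Markov kernel (the data-generating model), and let μ : Y → P(ℝ^d) be a Markov kernel (the learning procedure with fixed initial belief μ_0) such that μ(y) is a regular probability measure for every y ∈ Y. Let ρ denote the joint law of (θ, y), where θ ~ μ_0 and y | θ ~ P_θ. Suppose that for every test function f ∈ F_d with range in (a,b), the pushforward of ρ under the map (θ, y) ↦ F_{f_#μ(y)}(f(θ)), where F_{f_#μ(y)}(z) := μ(y)({x : f(x) ≤ z}), is the uniform distribution on (0,1).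 Then ∫∫ μ(y) dP_θ(y) dμ_0(θ) = μ_0; that is, the bind of μ_0 with the kernel θ ↦ (P_θ bound with μ) equals μ_0, so the learning procedure is weakly calibrated to (μ_0, P). -/
/-!
Fix a box `Iic c` and put `f x = maxᵢ (x i - c i)`, so that `Iic c = {f ≤ 0}`. Both `f` and
`g = -1/f` are test functions. The map `t ↦ -1/t` is increasing on each open half-line but
places the positive half-line below the negative one, so whenever `f θ ≠ 0` the two ranks
differ by a term that only sees the sign of `f θ`:
`μ(y){g ≤ g θ} + μ(y){f ≤ 0} = μ(y){f ≤ f θ} + 1_{f θ < 0}`.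
Both ranks are uniform under `ρ`, so their means agree, and integrating the identity against `ρ`
gives `m{f ≤ 0} = μ0{f < 0} = μ0{f ≤ 0}` for the averaged posterior `m`. Boxes form a generating
π-system, hence `m = μ0`.
-/

open MeasureTheory ProbabilityTheory Set

/-- The uniform probability distribution on the open interval (0,1). -/
noncomputable def unif01 : Measure ℝ := volume.restrict (Ioo (0:ℝ) 1)

open scoped ENNReal

lemma regularOn_bot_top_iff {γ : Measure ℝ} :
    regularOn γ ⊥ ⊤ ↔ γ ≪ volume ∧ volume ≪ γ := by
  have : erealIoo ⊥ ⊤ = univ := by ext x; simp [erealIoo]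
  simp [regularOn, this]

lemma testFun_of_map_volume {d : ℕ} {f : (Fin d → ℝ) → ℝ} (hf : Measurable f)
    (h₁ : volume.map f ≪ volume) (h₂ : volume ≪ volume.map f) : testFun f :=
  ⟨hf, ⊥, ⊤, bot_lt_top, fun _ => ⟨EReal.bot_lt_coe _, EReal.coe_lt_top _⟩,
    fun _ _ hν => regularOn_bot_top_iff.2 ⟨(hν.1.map hf).trans h₁, h₂.trans (hν.2.map hf)⟩⟩

lemma testFun.map_absolutelyContinuous {d : ℕ} {f : (Fin d → ℝ) → ℝ} (hf : testFun f)
    {ν : Measure (Fin d → ℝ)} [IsProbabilityMeasure ν] (hν : regular ν) :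
    ν.map f ≪ volume := by
  obtain ⟨-, _, _, -, -, hreg⟩ := hf
  exact (hreg ν inferInstance hν).2.1.trans Measure.restrict_le_self.absolutelyContinuous

section negInv

noncomputable def negInv (t : ℝ) : ℝ := -t⁻¹

lemma negInv_involutive : Function.Involutive negInv := fun t => by simp [negInv]

lemma measurable_negInv : Measurable negInv := by unfold negInv; fun_prop

lemma negInv_le_negInv_of_neg {s t : ℝ} (ht : t < 0) :
    negInv s ≤ negInv t ↔ s ≤ t ∨ 0 ≤ s := by
  unfold negInv
  rcases lt_or_ge s 0 with hs | hs
  · rw [neg_le_neg_iff, inv_le_inv_of_neg ht hs]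
    simp [hs.not_ge]
  · have : 0 ≤ -t⁻¹ := by simpa using ht.le
    have : -s⁻¹ ≤ 0 := by simpa using hs
    simp only [hs, or_true, iff_true]
    linarith

lemma negInv_le_negInv_of_pos {s t : ℝ} (ht : 0 < t) :
    negInv s ≤ negInv t ↔ 0 < s ∧ s ≤ t := by
  unfold negInv
  rcases lt_or_ge 0 s with hs | hs
  · rw [neg_le_neg_iff, inv_le_inv₀ ht hs]
    simp [hs]
  · have : -t⁻¹ < 0 := by simpa using ht
    have : 0 ≤ -s⁻¹ := by simpa using hs
    simp only [hs.not_gt, false_and, iff_false, not_le]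
    linarith

lemma map_volume_negInv_absolutelyContinuous : volume.map negInv ≪ volume := by
  refine Measure.AbsolutelyContinuous.mk fun N hN hN0 => ?_
  rw [Measure.map_apply measurable_negInv hN, ← negInv_involutive.image_eq_preimage_symm]
  have hdiff : DifferentiableOn ℝ negInv {0}ᶜ := fun t ht =>
    (differentiableAt_inv ht).neg.differentiableWithinAt
  have hsplit : negInv '' N ⊆ negInv '' (N ∩ {0}ᶜ) ∪ {0} := by
    rintro _ ⟨t, htN, rfl⟩
    by_cases ht : t = 0
    · simp [ht, negInv]
    · exact Or.inl ⟨t, ⟨htN, ht⟩, rfl⟩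
  refine measure_mono_null hsplit (measure_union_null ?_ Real.volume_singleton)
  exact addHaar_image_eq_zero_of_differentiableOn_of_addHaar_eq_zero volume
    (hdiff.mono inter_subset_right) (measure_mono_null inter_subset_left hN0)

lemma map_negInv_absolutelyContinuous {γ : Measure ℝ} (hγ : γ ≪ volume) :
    γ.map negInv ≪ volume :=
  (hγ.map measurable_negInv).trans map_volume_negInv_absolutelyContinuous

lemma absolutelyContinuous_map_negInv {γ : Measure ℝ} (hγ : volume ≪ γ) :
    volume ≪ γ.map negInv := by
  have h := map_volume_negInv_absolutelyContinuous.map measurable_negInv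
  rw [Measure.map_map measurable_negInv measurable_negInv, negInv_involutive.comp_self,
    Measure.map_id] at h
  exact h.trans (hγ.map measurable_negInv)

lemma measure_negInv_le_add_measure_Iic_zero (γ : Measure ℝ) [IsProbabilityMeasure γ]
    (hγ : γ {0} = 0) {t : ℝ} (ht : t ≠ 0) :
    γ {s | negInv s ≤ negInv t} + γ (Iic 0) = γ (Iic t) + (Iio 0).indicator 1 t := by
  rcases ht.lt_or_gt with ht | ht
  · have hset : {s | negInv s ≤ negInv t} = Iic t ∪ Ici 0 := by
      ext s; simp [negInv_le_negInv_of_neg ht]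
    rw [hset, measure_union (Iic_disjoint_Ici.2 ht.not_ge) measurableSet_Ici, add_assoc,
      ← measure_union_add_inter _ measurableSet_Iic, union_comm, Iic_union_Ici, Ici_inter_Iic,
      Icc_self, hγ, measure_univ, add_zero, indicator_of_mem (mem_Iio.2 ht), Pi.one_apply]
  · have hset : {s | negInv s ≤ negInv t} = Ioc 0 t := by
      ext s; simp [negInv_le_negInv_of_pos ht]
    rw [hset, add_comm, ← measure_union (Iic_disjoint_Ioc le_rfl) measurableSet_Ioc,
      Iic_union_Ioc_eq_Iic ht.le, indicator_of_notMem (notMem_Iio.2 ht.le), add_zero]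

end negInv

section maxCoord

variable {ι : Type*} [Fintype ι] [Nonempty ι]

noncomputable def maxCoord (x : ι → ℝ) : ℝ := Finset.univ.sup' Finset.univ_nonempty x

lemma measurable_maxCoord : Measurable (maxCoord : (ι → ℝ) → ℝ) := by
  have : (maxCoord : (ι → ℝ) → ℝ) = Finset.univ.sup' Finset.univ_nonempty fun i x => x i := by
    ext x; simp [maxCoord, Finset.sup'_apply]
  rw [this]
  exact Finset.measurable_sup' _ fun i _ => measurable_pi_apply i

lemma maxCoord_le_iff {x : ι → ℝ} {t : ℝ} : maxCoord x ≤ t ↔ ∀ i, x i ≤ t := by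
  simp [maxCoord]

lemma le_maxCoord (x : ι → ℝ) (i : ι) : x i ≤ maxCoord x :=
  Finset.le_sup' x (Finset.mem_univ i)

lemma exists_maxCoord_eq (x : ι → ℝ) : ∃ i, maxCoord x = x i := by
  obtain ⟨i, -, hi⟩ := Finset.exists_mem_eq_sup' (Finset.univ_nonempty (α := ι)) x
  exact ⟨i, hi⟩

lemma map_volume_maxCoord_absolutelyContinuous :
    volume.map (maxCoord : (ι → ℝ) → ℝ) ≪ volume := by
  refine Measure.AbsolutelyContinuous.mk fun N hN hN0 => ?_
  rw [Measure.map_apply measurable_maxCoord hN]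
  have hcover : maxCoord ⁻¹' N ⊆ ⋃ i : ι, Function.eval i ⁻¹' N := fun x hx => by
    obtain ⟨i, hi⟩ := exists_maxCoord_eq x
    exact mem_iUnion.2 ⟨i, by simpa [← hi] using hx⟩
  refine measure_mono_null hcover (measure_iUnion_null fun i => ?_)
  rw [volume_pi]
  exact Measure.pi_eval_preimage_null _ hN0

lemma absolutelyContinuous_map_volume_maxCoord :
    volume ≪ volume.map (maxCoord : (ι → ℝ) → ℝ) := by
  classical
  refine Measure.AbsolutelyContinuous.mk fun N hN hN0 => ?_
  rw [Measure.map_apply measurable_maxCoord hN] at hN0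
  obtain ⟨i₀⟩ := ‹Nonempty ι›
  have hcover : N ⊆ ⋃ n : ℕ, N ∩ Ioi (-n) := fun t ht =>
    mem_iUnion.2 ((exists_nat_gt (-t)).imp fun n hn => ⟨ht, neg_lt.1 hn⟩)
  refine measure_mono_null hcover (measure_iUnion_null fun n => ?_)
  -- On this box the maximum is attained at `i₀`, and every other factor has infinite volume.
  set T : Set (ι → ℝ) := univ.pi (Function.update (fun _ => Iic (-n)) i₀ (N ∩ Ioi (-n)))
  have hT : T ⊆ maxCoord ⁻¹' N := fun x hx => by
    have hx₀ : x i₀ ∈ N ∩ Ioi (-n) := by simpa using hx i₀ (mem_univ _)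
    have hmax : maxCoord x = x i₀ := by
      refine le_antisymm (maxCoord_le_iff.2 fun j => ?_) (le_maxCoord x i₀)
      rcases eq_or_ne j i₀ with rfl | hj
      · exact le_rfl
      · have := hx j (mem_univ _)
        rw [Function.update_of_ne hj] at this
        exact (mem_Iic.1 this).trans hx₀.2.le
    rw [mem_preimage, hmax]
    exact hx₀.1
  have hT0 : volume T = 0 := measure_mono_null hT hN0
  rw [volume_pi, Measure.pi_pi, Finset.prod_eq_zero_iff] at hT0
  obtain ⟨j, -, hj⟩ := hT0
  rcases eq_or_ne j i₀ with rfl | hne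
  · simpa using hj
  · simp [Function.update_of_ne hne] at hj

lemma map_volume_maxCoord_sub (c : ι → ℝ) :
    volume.map (fun x => maxCoord (x - c)) = volume.map (maxCoord : (ι → ℝ) → ℝ) := by
  conv_rhs => rw [← (measurePreserving_sub_right volume c).map_eq]
  exact (Measure.map_map measurable_maxCoord (measurable_sub_const c)).symm

end maxCoord

section testFun

variable {d : ℕ} [Nonempty (Fin d)]

lemma testFun_maxCoord_sub (c : Fin d → ℝ) : testFun fun x => maxCoord (x - c) := by
  refine testFun_of_map_volume (measurable_maxCoord.comp (measurable_sub_const c)) ?_ ?_ <;>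
    rw [map_volume_maxCoord_sub]
  exacts [map_volume_maxCoord_absolutelyContinuous, absolutelyContinuous_map_volume_maxCoord]

lemma testFun_negInv_maxCoord_sub (c : Fin d → ℝ) :
    testFun fun x => negInv (maxCoord (x - c)) := by
  have hm : Measurable fun x : Fin d → ℝ => maxCoord (x - c) :=
    measurable_maxCoord.comp (measurable_sub_const c)
  have hmap : volume.map (fun x => negInv (maxCoord (x - c))) =
      (volume.map (maxCoord : (Fin d → ℝ) → ℝ)).map negInv := by
    rw [← map_volume_maxCoord_sub c, Measure.map_map measurable_negInv hm]
    rfl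
  refine testFun_of_map_volume (measurable_negInv.comp hm) ?_ ?_ <;> rw [hmap]
  exacts [map_negInv_absolutelyContinuous map_volume_maxCoord_absolutelyContinuous,
    absolutelyContinuous_map_negInv absolutelyContinuous_map_volume_maxCoord]

end testFun

lemma lintegral_eq_lintegral_map_toReal {Ω : Type*} [MeasurableSpace Ω] (ρ : Measure Ω)
    {F : Ω → ℝ≥0∞} (hF : Measurable F) (hF_ne_top : ∀ ω, F ω ≠ ∞) :
    ∫⁻ ω, F ω ∂ρ = ∫⁻ x, ENNReal.ofReal x ∂(ρ.map fun ω => (F ω).toReal) := by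
  rw [lintegral_map ENNReal.measurable_ofReal hF.ennreal_toReal]
  simp_rw [ENNReal.ofReal_toReal (hF_ne_top _)]

section kernel

variable {X Y : Type*} [MeasurableSpace X] [MeasurableSpace Y]
  (μ0 : Measure X) (P : Kernel X Y) (μ : Kernel Y X)

lemma bind_bind_eq_comp :
    μ0.bind (fun θ => (P θ).bind (fun y => μ y)) = (μ ∘ₖ P) ∘ₘ μ0 := rfl

lemma comp_comp_apply [SFinite μ0] [IsSFiniteKernel P] {A : Set X} (hA : MeasurableSet A) :
    ((μ ∘ₖ P) ∘ₘ μ0) A = ∫⁻ p, μ p.2 A ∂(μ0 ⊗ₘ P) := by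
  rw [Measure.bind_apply hA (Kernel.aemeasurable _),
    Measure.lintegral_compProd (f := fun p => μ p.2 A) ((μ.measurable_coe hA).comp measurable_snd)]
  simp_rw [Kernel.comp_apply' _ _ _ hA]

lemma measurable_measure_setOf_le [IsSFiniteKernel μ] {f : X → ℝ} (hf : Measurable f) :
    Measurable fun p : X × Y => μ p.2 {x | f x ≤ f p.1} := by
  have hs : MeasurableSet {q : (X × Y) × X | f q.2 ≤ f q.1.1} :=
    measurableSet_le (hf.comp measurable_snd) (hf.comp (measurable_fst.comp measurable_fst))
  simpa using Kernel.measurable_kernel_prodMk_left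
    (κ := μ.comap (Prod.snd : X × Y → Y) measurable_snd) hs

lemma measure_setOf_negInv_le_add {ν : Measure X} [IsProbabilityMeasure ν] {f : X → ℝ}
    (hf : Measurable f) (hν : ν.map f {0} = 0) {t : ℝ} (ht : t ≠ 0) :
    ν {x | negInv (f x) ≤ negInv t} + ν {x | f x ≤ 0} =
      ν {x | f x ≤ t} + (Iio 0).indicator 1 t := by
  have := Measure.isProbabilityMeasure_map (μ := ν) hf.aemeasurable
  have h := measure_negInv_le_add_measure_Iic_zero _ hν ht
  rwa [Measure.map_apply hf (measurableSet_le measurable_negInv measurable_const),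
    Measure.map_apply hf measurableSet_Iic, Measure.map_apply hf measurableSet_Iic] at h

lemma lintegral_indicator_Iio_zero_fst [SFinite μ0] [IsMarkovKernel P] {f : X → ℝ}
    (hf : Measurable f) (hμ0 : μ0.map f {0} = 0) :
    ∫⁻ p, (Iio 0).indicator 1 (f p.1) ∂(μ0 ⊗ₘ P) = μ0 {x | f x ≤ 0} := by
  have hind : Measurable fun p : X × Y => (Iio (0 : ℝ)).indicator (1 : ℝ → ℝ≥0∞) (f p.1) :=
    (measurable_one.indicator measurableSet_Iio).comp (hf.comp measurable_fst)
  rw [Measure.lintegral_compProd hind]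
  simp only [lintegral_const, measure_univ, mul_one]
  rw [← lintegral_map (measurable_one.indicator measurableSet_Iio) hf,
    lintegral_indicator_one measurableSet_Iio, measure_congr (Iio_ae_eq_Iic' hμ0),
    Measure.map_apply hf measurableSet_Iic]
  rfl

theorem comp_comp_setOf_le_zero [IsFiniteMeasure μ0] [IsMarkovKernel P] [IsMarkovKernel μ]
    {f : X → ℝ} (hf : Measurable f) (hμ0 : μ0.map f {0} = 0) (hμ : ∀ y, (μ y).map f {0} = 0)
    (hlaw : (μ0 ⊗ₘ P).map (fun p => (μ p.2 {x | negInv (f x) ≤ negInv (f p.1)}).toReal) =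
      (μ0 ⊗ₘ P).map (fun p => (μ p.2 {x | f x ≤ f p.1}).toReal)) :
    ((μ ∘ₖ P) ∘ₘ μ0) {x | f x ≤ 0} = μ0 {x | f x ≤ 0} := by
  have hnonzero : ∀ᵐ p ∂(μ0 ⊗ₘ P), f p.1 ≠ 0 := by
    have h : ∀ᵐ θ ∂μ0, f θ ≠ 0 :=
      ae_of_ae_map hf.aemeasurable (measure_eq_zero_iff_ae_notMem.1 hμ0)
    rw [← Measure.fst_compProd μ0 P] at h
    exact ae_of_ae_map measurable_fst.aemeasurable h
  have hpt : ∀ᵐ p ∂(μ0 ⊗ₘ P),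
      μ p.2 {x | negInv (f x) ≤ negInv (f p.1)} + μ p.2 {x | f x ≤ 0} =
        μ p.2 {x | f x ≤ f p.1} + (Iio 0).indicator 1 (f p.1) := by
    filter_upwards [hnonzero] with p hp
    exact measure_setOf_negInv_le_add hf (hμ p.2) hp
  have hg : Measurable fun x => negInv (f x) := measurable_negInv.comp hf
  have hfin : ∫⁻ p, μ p.2 {x | f x ≤ f p.1} ∂(μ0 ⊗ₘ P) ≠ ∞ :=
    ne_top_of_le_ne_top (measure_ne_top (μ0 ⊗ₘ P) univ)
      ((lintegral_mono fun _ => prob_le_one).trans_eq lintegral_one)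
  have hint := lintegral_congr_ae hpt
  -- The two rank integrals agree because the ranks have the same law.
  rw [lintegral_add_left (measurable_measure_setOf_le μ hg),
    lintegral_add_left (measurable_measure_setOf_le μ hf),
    lintegral_eq_lintegral_map_toReal _ (measurable_measure_setOf_le μ hg)
      (fun _ => measure_ne_top _ _), hlaw,
    ← lintegral_eq_lintegral_map_toReal _ (measurable_measure_setOf_le μ hf)
      (fun _ => measure_ne_top _ _),
    ENNReal.add_right_inj hfin] at hint
  rwa [← comp_comp_apply _ _ _ (measurableSet_le hf measurable_const),
    lintegral_indicator_Iio_zero_fst _ _ hf hμ0] at hint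

end kernel

theorem ext_of_Iic_pi {ι : Type*} [Finite ι] {μ ν : Measure (ι → ℝ)}
    [IsProbabilityMeasure μ] [IsProbabilityMeasure ν] (h : ∀ c, μ (Iic c) = ν (Iic c)) :
    μ = ν := by
  have hspan : IsCountablySpanning (range (Iic : ℝ → Set ℝ)) :=
    ⟨fun n : ℕ => Iic (n : ℝ), fun _ => mem_range_self _,
      eq_univ_of_forall fun t => mem_iUnion.2 (exists_nat_ge t)⟩
  refine ext_of_generate_finite _
    (generateFrom_eq_pi (fun _ => (borel_eq_generateFrom_Iic ℝ).symm.trans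
      BorelSpace.measurable_eq.symm) fun _ => hspan).symm
    (IsPiSystem.pi fun _ => isPiSystem_Iic) ?_ (by simp)
  rintro _ ⟨S, hS, rfl⟩
  choose c hc using fun i => hS i (mem_univ i)
  simpa [← funext hc, pi_univ_Iic] using h c

/-- Strongly calibrated implies weakly calibrated.  Let μ0 be a regular probability measure
on ℝ^d (initial belief), P a Markov kernel from ℝ^d to Y (data-generating model), and
μ a Markov kernel from Y to ℝ^d (learning procedure) with regular output.  If, for every
test function f ∈ F_d, the pushforward of the joint law ρ = μ0 ⊗ₘ P under
(θ, y) ↦ F_{f_#μ(y)}(f(θ)) = μ(y)({x : f(x) ≤ f(θ)}) is uniform on (0,1), then the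
data-averaged output ∫∫ μ(y) dP_θ(y) dμ0(θ) equals μ0. -/
theorem stmt_7 {d : ℕ} {Y : Type*} [MeasurableSpace Y]
    (μ0 : Measure (Fin d → ℝ)) [IsProbabilityMeasure μ0] (hμ0 : regular μ0)
    (P : Kernel (Fin d → ℝ) Y) [IsMarkovKernel P]
    (μ : Kernel Y (Fin d → ℝ)) [IsMarkovKernel μ]
    (hμreg : ∀ y : Y, regular (μ y))
    (hstrong : ∀ f : (Fin d → ℝ) → ℝ, testFun f →
      (μ0.compProd P).map
        (fun p : (Fin d → ℝ) × Y => ((μ p.2) {x | f x ≤ f p.1}).toReal) = unif01) :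
    μ0.bind (fun θ => (P θ).bind (fun y => μ y)) = μ0 := by
  rw [bind_bind_eq_comp]
  refine ext_of_Iic_pi fun c => ?_
  rcases isEmpty_or_nonempty (Fin d) with _ | _
  · simp [Iic]
  have hf := testFun_maxCoord_sub c
  have hIic : Iic c = {x | maxCoord (x - c) ≤ 0} := by
    ext x
    simp [maxCoord_le_iff, Pi.le_def]
  rw [hIic]
  exact comp_comp_setOf_le_zero μ0 P μ hf.1
    (hf.map_absolutelyContinuous hμ0 Real.volume_singleton)
    (fun y => hf.map_absolutelyContinuous (hμreg y) Real.volume_singleton)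
    ((hstrong _ (testFun_negInv_maxCoord_sub c)).trans (hstrong _ hf).symm)
end

section
/- (Bayesian inference is strongly calibrated.) Let ρ be a probability measure on ℝ^d × Y, where Y is a standard Borel space, representing the joint law of a parameter θ and data y. Let κ : Y → P(ℝ^d) be the conditional distribution of θ given y (a disintegration of ρ over its second marginal). Let f : ℝ^d → ℝ be measurable with range in an open interval (a,b) and suppose that for (second-marginal)-almost every y the pushforward f_#(κ(y)) is regular on (a,b). Then the pushforward of ρ under the map (θ, y) ↦ F_{f_#κ(y)}(f(θ)), where F_{f_#κ(y)}(z) := κ(y)({x : f(x) ≤ z}), is the uniform distribution on (0,1). -/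
/-! For almost every `y`, the law `γ = f_#κ(y)` has no atoms, so its CDF `F` is continuous and
`F(f(θ))` is uniform under `κ(y)` (the probability integral transform): `{F ≤ t}` is a closed
down-set `Iic s` with `F s = t`. Writing `ρ` as the composition of its `Y`-marginal with `κ`,
integrating this conditional statement over `y` gives the claim. -/

open MeasureTheory ProbabilityTheory Set

open Filter

lemma unif01_Iic (t : ℝ) : unif01 (Iic t) = ENNReal.ofReal (min t 1) := by
  rw [unif01, ← measure_congr Iio_ae_eq_Iic, Measure.restrict_apply measurableSet_Iio, inter_comm,
    Ioo_inter_Iio, Real.volume_Ioo, sub_zero, min_comm]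

lemma IsLowerSet.eq_Iic_csSup {α : Type*} [ConditionallyCompleteLinearOrder α]
    [TopologicalSpace α] [OrderTopology α] {s : Set α} (hl : IsLowerSet s) (hc : IsClosed s) (hne : s.Nonempty)
    (hbdd : BddAbove s) : s = Iic (sSup s) :=
  Subset.antisymm (fun _ hx => le_csSup hbdd hx) fun _ hx => hl hx (hc.csSup_mem hne hbdd)

namespace ProbabilityTheory

variable (μ : Measure ℝ) [IsProbabilityMeasure μ] [NullSingletonClass μ]

lemma continuous_cdf : Continuous (cdf μ) := by
  refine continuous_iff_continuousAt.2 fun x => ?_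
  rw [(monotone_cdf μ).continuousAt_iff_leftLim_eq_rightLim, StieltjesFunction.rightLim_eq]
  have h := (cdf μ).measure_singleton x
  rw [measure_cdf, measure_singleton, eq_comm, ENNReal.ofReal_eq_zero, sub_nonpos] at h
  exact le_antisymm ((monotone_cdf μ).leftLim_le le_rfl) h

lemma measure_cdf_le_eq_ofReal {t : ℝ} (ht0 : 0 ≤ t) (ht1 : t < 1) :
    μ {x | cdf μ x ≤ t} = ENNReal.ofReal t := by
  set S := {x | cdf μ x ≤ t}
  have hclosed : IsClosed S := isClosed_le (continuous_cdf μ) continuous_const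
  have hlower : IsLowerSet S := fun _ _ hxy hy => (monotone_cdf μ hxy).trans hy
  rcases S.eq_empty_or_nonempty with hS | hS
  · have ht : t ≤ 0 := ge_of_tendsto (tendsto_cdf_atBot μ) (Eventually.of_forall fun x =>
      (not_le.1 fun hx => eq_empty_iff_forall_notMem.1 hS x hx).le)
    rw [hS, measure_empty, le_antisymm ht ht0, ENNReal.ofReal_zero]
  have hbdd : BddAbove S := by
    obtain ⟨x₀, hx₀⟩ := eventually_atTop.1
      ((tendsto_cdf_atTop μ).eventually (eventually_gt_nhds ht1))
    exact ⟨x₀, fun x hx => not_lt.1 fun h => (hx₀ x h.le).not_ge hx⟩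
  have hS_eq : S = Iic (sSup S) := hlower.eq_Iic_csSup hclosed hS hbdd
  have hcdf : cdf μ (sSup S) = t := by
    refine le_antisymm (hclosed.csSup_mem hS hbdd) ?_
    have hIoi : Ioi (sSup S) ⊆ {x | t ≤ cdf μ x} := fun x hx => show t ≤ cdf μ x from
      (not_le.1 fun h => (hS_eq.subset h : x ≤ sSup S).not_gt (mem_Ioi.1 hx)).le
    have := (isClosed_le continuous_const (continuous_cdf μ)).closure_subset_iff.2 hIoi
    rw [closure_Ioi] at this
    exact this self_mem_Ici
  rw [hS_eq, ← ofReal_cdf, hcdf]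

lemma map_cdf_eq_unif01 : μ.map (cdf μ) = unif01 := by
  refine Measure.ext_of_Iic _ _ fun t => ?_
  rw [Measure.map_apply (monotone_cdf μ).measurable measurableSet_Iic, unif01_Iic]
  rcases lt_or_ge t 0 with ht0 | ht0
  · have : cdf μ ⁻¹' Iic t = ∅ :=
      eq_empty_of_forall_notMem fun x hx => (ht0.trans_le (cdf_nonneg μ x)).not_ge hx
    rw [this, measure_empty, ENNReal.ofReal_of_nonpos ((min_le_left _ _).trans ht0.le)]
  rcases lt_or_ge t 1 with ht1 | ht1
  · rw [min_eq_left ht1.le]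
    exact measure_cdf_le_eq_ofReal μ ht0 ht1
  · have : cdf μ ⁻¹' Iic t = univ :=
      eq_univ_of_forall fun x => (cdf_le_one μ x).trans ht1
    rw [this, measure_univ, min_eq_right ht1, ENNReal.ofReal_one]

end ProbabilityTheory

namespace MeasureTheory.Measure

variable {X Y Z : Type*} [MeasurableSpace X] [MeasurableSpace Y] [MeasurableSpace Z]

lemma eq_map_swap_compProd {ρ : Measure (X × Y)} [IsFiniteMeasure ρ] {ν : Measure Y}
    [SFinite ν] {κ : Kernel Y X} [IsSFiniteKernel κ]
    (hdis : ∀ (A : Set X) (B : Set Y), MeasurableSet A → MeasurableSet B →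
      ρ (A ×ˢ B) = ∫⁻ y in B, κ y A ∂ν) :
    ρ = (ν ⊗ₘ κ).map Prod.swap := by
  have hrect : ∀ A B, MeasurableSet A → MeasurableSet B →
      ρ (A ×ˢ B) = (ν ⊗ₘ κ).map Prod.swap (A ×ˢ B) := by
    intro A B hA hB
    rw [map_apply measurable_swap (hA.prod hB), preimage_swap_prod,
      compProd_apply_prod hB hA, hdis A B hA hB]
  refine ext_of_generate_finite _ generateFrom_prod.symm isPiSystem_prod ?_ ?_
  · rintro _ ⟨A, hA, B, hB, rfl⟩
    exact hrect A B hA hB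
  · simpa using hrect univ univ .univ .univ

lemma map_compProd_of_ae_map_eq {ν : Measure Y} [IsProbabilityMeasure ν]
    {κ : Kernel Y X} [IsSFiniteKernel κ] {g : Y × X → Z} (hg : Measurable g) {μ : Measure Z}
    (h : ∀ᵐ y ∂ν, (κ y).map (fun x => g (y, x)) = μ) :
    (ν ⊗ₘ κ).map g = μ := by
  ext s hs
  rw [map_apply hg hs, compProd_apply (hg hs)]
  have hfiber : ∀ᵐ y ∂ν, κ y (Prod.mk y ⁻¹' (g ⁻¹' s)) = μ s := h.mono fun y hy => by
    rw [← hy, map_apply (f := fun x => g (y, x)) (hg.comp measurable_prodMk_left) hs]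
    rfl
  rw [lintegral_congr_ae hfiber, lintegral_const, measure_univ, mul_one]

end MeasureTheory.Measure

lemma ProbabilityTheory.Kernel.measurable_apply_preimage_Iic {X Y : Type*} [MeasurableSpace X]
    [MeasurableSpace Y] {κ : Kernel Y X} [IsSFiniteKernel κ] {f : X → ℝ}
    (hf : Measurable f) : Measurable fun p : Y × ℝ => κ p.1 (f ⁻¹' Iic p.2) :=
  (κ.prodMkRight ℝ).measurable_kernel_prodMk_left
    (measurableSet_le (hf.comp measurable_snd) measurable_fst.snd)

theorem stmt_9_general {d : ℕ} {Y : Type*} [MeasurableSpace Y]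
    (ρ : Measure ((Fin d → ℝ) × Y)) [IsProbabilityMeasure ρ]
    (κ : Kernel Y (Fin d → ℝ)) [IsMarkovKernel κ]
    (hdis : ∀ (A : Set (Fin d → ℝ)) (B : Set Y), MeasurableSet A → MeasurableSet B →
      ρ (A ×ˢ B) = ∫⁻ y in B, κ y A ∂(ρ.map Prod.snd))
    (f : (Fin d → ℝ) → ℝ) (hf : Measurable f)
    (a b : EReal)
    (hreg : ∀ᵐ y ∂(ρ.map Prod.snd), regularOn ((κ y).map f) a b) :
    ρ.map (fun p : (Fin d → ℝ) × Y => ((κ p.2) {x | f x ≤ f p.1}).toReal) = unif01 := by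
  have hg : Measurable fun p : (Fin d → ℝ) × Y => ((κ p.2) {x | f x ≤ f p.1}).toReal :=
    ((Kernel.measurable_apply_preimage_Iic hf).comp
      (measurable_snd.prodMk (hf.comp measurable_fst))).ennreal_toReal
  have : IsProbabilityMeasure (ρ.map Prod.snd) :=
    Measure.isProbabilityMeasure_map measurable_snd.aemeasurable
  rw [Measure.eq_map_swap_compProd hdis, Measure.map_map hg measurable_swap]
  refine Measure.map_compProd_of_ae_map_eq (hg.comp measurable_swap) ?_
  filter_upwards [hreg] with y hy
  have hac : (κ y).map f ≪ volume :=
    hy.2.1.trans (Measure.absolutelyContinuous_of_le Measure.restrict_le_self)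
  have : IsProbabilityMeasure ((κ y).map f) := Measure.isProbabilityMeasure_map hf.aemeasurable
  have : NullSingletonClass ((κ y).map f) := ⟨fun z => hac (measure_singleton z)⟩
  have hcdf : (fun x => ((κ y) {x' | f x' ≤ f x}).toReal) = cdf ((κ y).map f) ∘ f := by
    ext x
    rw [Function.comp_apply, cdf_eq_real, measureReal_def, Measure.map_apply hf measurableSet_Iic]
    rfl
  change (κ y).map (fun x => ((κ y) {x' | f x' ≤ f x}).toReal) = unif01
  rw [hcdf, ← Measure.map_map (monotone_cdf _).measurable hf, map_cdf_eq_unif01]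

/-- Bayesian inference is strongly calibrated: if ρ is the joint law of (θ, y), κ is the
conditional distribution of θ given y (a disintegration of ρ over its second marginal),
and f is a test function whose pushforward under κ(y) is almost surely regular on (a,b),
then the pushforward of ρ under (θ, y) ↦ F_{f_#κ(y)}(f(θ)) is uniform on (0,1). -/
theorem stmt_9 {d : ℕ} {Y : Type*} [MeasurableSpace Y] [StandardBorelSpace Y]
    (ρ : Measure ((Fin d → ℝ) × Y)) [IsProbabilityMeasure ρ]
    (κ : Kernel Y (Fin d → ℝ)) [IsMarkovKernel κ]
    (hdis : ∀ (A : Set (Fin d → ℝ)) (B : Set Y), MeasurableSet A → MeasurableSet B →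
      ρ (A ×ˢ B) = ∫⁻ y in B, κ y A ∂(ρ.map Prod.snd))
    (f : (Fin d → ℝ) → ℝ) (hf : Measurable f)
    (a b : EReal) (hab : a < b)
    (hrange : ∀ x, a < (f x : EReal) ∧ (f x : EReal) < b)
    (hreg : ∀ᵐ y ∂(ρ.map Prod.snd), regularOn ((κ y).map f) a b) :
    ρ.map (fun p : (Fin d → ℝ) × Y => ((κ p.2) {x | f x ≤ f p.1}).toReal) = unif01 :=
  stmt_9_general ρ κ hdis f hf a b hreg
end

section
/- (Fractional posteriors are weakly calibrated if and only if t = 0 or t = 1.) Let σ > 0 and t ∈ [0,1]. Then (N(0,1)).bind(θ ↦ (N(θ,σ²)).bind(y ↦ N(t y/(t+σ²), σ²/(t+σ²)))) = N(0,1) if and only if t = 0 or t = 1. -/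
/-!
Mixing the Gaussian kernel `y ↦ N(c y, w)` over `N(m, v)` is the pushforward of `N(m, v)` under
`y ↦ c y` convolved with `N(0, w)`, hence equals `N(c m, c² v + w)`. Applied twice with
`c = t / (t + σ²)`, the data-averaged fractional posterior is the centred Gaussian of variance
`c² (1 + σ²) + σ² / (t + σ²)`, and clearing denominators this equals `1` iff
`σ² (t + σ²) t (t - 1) = 0`.
-/

open MeasureTheory ProbabilityTheory

open scoped NNReal

namespace MeasureTheory.Measure

variable {α M : Type*} [MeasurableSpace α] [AddMonoid M] [MeasurableSpace M] [MeasurableAdd₂ M]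

lemma measurable_map_const_add (ν : Measure M) [SFinite ν] :
    Measurable fun x : M => ν.map (x + ·) := by
  refine measurable_of_measurable_coe _ fun s hs => ?_
  simp_rw [map_apply (measurable_const_add _) hs]
  exact measurable_measure_prodMk_left (hs.preimage measurable_add)

lemma bind_map_const_add_eq_map_conv (μ : Measure α) (ν : Measure M) [SFinite ν] {f : α → M}
    (hf : Measurable f) :
    μ.bind (fun x => ν.map (f x + ·)) = μ.map f ∗ ν := by
  ext s hs
  have hs' : MeasurableSet ((fun p : M × M => p.1 + p.2) ⁻¹' s) := hs.preimage measurable_add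
  rw [bind_apply (f := fun x => ν.map (f x + ·)) hs
      ((measurable_map_const_add ν).comp hf).aemeasurable, conv,
    map_apply measurable_add hs, prod_apply hs',
    lintegral_map (measurable_measure_prodMk_left hs') hf]
  simp_rw [map_apply (measurable_const_add _) hs]
  rfl

end MeasureTheory.Measure

lemma ProbabilityTheory.gaussianReal_bind_gaussianReal_const_mul (m c : ℝ) (v w : ℝ≥0) :
    (gaussianReal m v).bind (fun y => gaussianReal (c * y) w)
      = gaussianReal (c * m) (.mk (c ^ 2) (sq_nonneg c) * v + w) := by
  have hshift : ∀ y, gaussianReal (c * y) w = (gaussianReal 0 w).map (c * y + ·) := fun y => by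
    rw [gaussianReal_map_const_add, zero_add]
  simp_rw [hshift]
  rw [Measure.bind_map_const_add_eq_map_conv _ _ (measurable_const_mul c),
    gaussianReal_map_const_mul, gaussianReal_conv_gaussianReal, add_zero]

lemma fractional_posterior_variance_eq_one_iff {σ t : ℝ} (hσ : 0 < σ) (ht : 0 ≤ t) :
    (t / (t + σ ^ 2)) ^ 2 * (1 + σ ^ 2) + σ ^ 2 / (t + σ ^ 2) = 1 ↔ t = 0 ∨ t = 1 := by
  have hd : t + σ ^ 2 ≠ 0 := by positivity
  rw [div_pow, div_mul_eq_mul_div, div_add_div _ _ (pow_ne_zero 2 hd) hd,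
    div_eq_one_iff_eq (by positivity)]
  constructor
  · intro h
    have hfactored : σ ^ 2 * (t + σ ^ 2) * (t * (t - 1)) = 0 := by linear_combination h
    simpa [hσ.ne', hd, sub_eq_zero] using hfactored
  · rintro (rfl | rfl) <;> ring

/-- Fractional posteriors are weakly calibrated if and only if t = 0 or t = 1: the
data-averaged fractional posterior, obtained by sampling θ ~ N(0,1), then
y | θ ~ N(θ, σ²), then ϑ | y ~ N(t y/(t+σ²), σ²/(t+σ²)), equals the prior N(0,1) iff
t = 0 or t = 1. -/
theorem stmt_17 (σ t : ℝ) (hσ : 0 < σ) (ht : t ∈ Set.Icc (0:ℝ) 1) :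
    (gaussianReal 0 1).bind
      (fun θ : ℝ => (gaussianReal θ ((σ ^ 2).toNNReal)).bind
        (fun y : ℝ => gaussianReal (t * y / (t + σ ^ 2))
          ((σ ^ 2 / (t + σ ^ 2)).toNNReal))) = gaussianReal 0 1 ↔
    t = 0 ∨ t = 1 := by
  obtain ⟨ht0, -⟩ := ht
  simp_rw [mul_div_right_comm t, gaussianReal_bind_gaussianReal_const_mul, mul_zero,
    gaussianReal_ext_iff, true_and, ← NNReal.coe_inj]
  push_cast
  rw [Real.coe_toNNReal _ (by positivity), Real.coe_toNNReal _ (by positivity)]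
  convert fractional_posterior_variance_eq_one_iff hσ ht0 using 2
  ring
end
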